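/- arXiv:0912.4482 — 2 statements merged into one kernel-verified Lean document; each statement's English description precedes it below -/
import Mathlib

section
/- For every α ∈ (-1/2, 1/2) with α ≠ 0, there is a constant C = C(α) such that for all 0 < s < t one has ((t^α - s^α)/(t - s)) · s^{1/2 - α} · t^{1/2} ≤ C · (s/t)^{1/2 - max(α, 0)}. Here when α < 0 the quantity (t^α - s^α)/(t-s) is negative and one bounds its absolute value: |t^α - s^α|/(t - s) · s^{1/2 - α} · t^{1/2} ≤ C (s/t)^{1/2 - max(α,0)}. -/
/-!
Put `m = max α 0`. For `-1 ≤ α ≤ 1` the difference quotient `|t^α - s^α| / (t - s)` is at most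
`s^(α - m) * t^(m - 1)`: for `α ≥ 0` because `s * t^(α-1) ≤ s^α`, for `α ≤ 0` because
`s^(1+α) ≤ t^(1+α)`. Multiplying by `s^(1/2 - α) * t^(1/2)` gives exactly `(s/t)^(1/2 - m)`,
so `C = 1` works.
-/

open Set

namespace Real

lemma rpow_sub_rpow_le_mul_rpow_sub_one {α s t : ℝ} (hα : α ≤ 1) (hs : 0 < s) (hst : s ≤ t) :
    t ^ α - s ^ α ≤ (t - s) * t ^ (α - 1) := by
  have ht : 0 < t := hs.trans_le hst
  have hmono : t ^ (α - 1) ≤ s ^ (α - 1) := rpow_le_rpow_of_nonpos hs hst (by linarith)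
  have hst' : s * t ^ (α - 1) ≤ s ^ α := by
    calc s * t ^ (α - 1) ≤ s * s ^ (α - 1) := by gcongr
      _ = s ^ α := by rw [rpow_sub_one hs.ne', mul_div_cancel₀ _ hs.ne']
  have ht' : t * t ^ (α - 1) = t ^ α := by rw [rpow_sub_one ht.ne', mul_div_cancel₀ _ ht.ne']
  linear_combination hst' - ht'

lemma rpow_sub_rpow_le_mul_rpow_div {α s t : ℝ} (hα : -1 ≤ α) (hs : 0 < s) (hst : s ≤ t) :
    s ^ α - t ^ α ≤ (t - s) * s ^ α / t := by
  have ht : 0 < t := hs.trans_le hst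
  have hmono : s ^ α * s ≤ t ^ α * t := by
    rw [← rpow_add_one hs.ne', ← rpow_add_one ht.ne']
    exact rpow_le_rpow hs.le hst (by linarith)
  rw [le_div_iff₀ ht]
  linear_combination hmono

lemma abs_rpow_sub_rpow_le {α s t : ℝ} (hα : α ∈ Icc (-1 : ℝ) 1) (hs : 0 < s) (hst : s ≤ t) :
    |t ^ α - s ^ α| ≤ (t - s) * s ^ (α - max α 0) * t ^ (max α 0 - 1) := by
  rcases le_total 0 α with hα0 | hα0
  · have hle : s ^ α ≤ t ^ α := rpow_le_rpow hs.le hst hα0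
    rw [abs_of_nonneg (sub_nonneg.mpr hle), max_eq_left hα0, sub_self, rpow_zero, mul_one]
    exact rpow_sub_rpow_le_mul_rpow_sub_one hα.2 hs hst
  · have hle : t ^ α ≤ s ^ α := rpow_le_rpow_of_nonpos hs hst hα0
    rw [abs_sub_comm, abs_of_nonneg (sub_nonneg.mpr hle), max_eq_right hα0, sub_zero, zero_sub,
      rpow_neg_one, ← div_eq_mul_inv]
    exact rpow_sub_rpow_le_mul_rpow_div hα.1 hs hst

end Real

theorem stmt1_general (α : ℝ) (hα : α ∈ Ioo (-(1/2) : ℝ) (1/2)) :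
    ∃ C : ℝ, 0 < C ∧ ∀ s t : ℝ, 0 < s → s < t →
      |t ^ α - s ^ α| / (t - s) * s ^ ((1:ℝ)/2 - α) * t ^ ((1:ℝ)/2)
        ≤ C * (s / t) ^ ((1:ℝ)/2 - max α 0) := by
  refine ⟨1, one_pos, fun s t hs hst => ?_⟩
  have ht : 0 < t := hs.trans hst
  set m := max α 0
  have hquot : |t ^ α - s ^ α| / (t - s) ≤ s ^ (α - m) * t ^ (m - 1) := by
    rw [div_le_iff₀' (sub_pos.mpr hst), ← mul_assoc]
    exact Real.abs_rpow_sub_rpow_le ⟨by linarith [hα.1], by linarith [hα.2]⟩ hs hst.le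
  have hs_pow : s ^ (α - m) * s ^ ((1:ℝ)/2 - α) = s ^ ((1:ℝ)/2 - m) := by
    rw [← Real.rpow_add hs]; ring_nf
  have ht_pow : (t ^ (m - 1) * t ^ ((1:ℝ)/2))⁻¹ = t ^ ((1:ℝ)/2 - m) := by
    rw [← Real.rpow_add ht, ← Real.rpow_neg ht.le]; ring_nf
  calc |t ^ α - s ^ α| / (t - s) * s ^ ((1:ℝ)/2 - α) * t ^ ((1:ℝ)/2)
      ≤ s ^ (α - m) * t ^ (m - 1) * s ^ ((1:ℝ)/2 - α) * t ^ ((1:ℝ)/2) := by gcongr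
    _ = 1 * (s / t) ^ ((1:ℝ)/2 - m) := by
      rw [Real.div_rpow hs.le ht.le, ← hs_pow, ← ht_pow, div_inv_eq_mul]; ring

/-- For every `α ∈ (-1/2, 1/2)`, `α ≠ 0`, there is a constant `C` such that
for all `0 < s < t`, `|t^α - s^α|/(t - s) · s^{1/2-α} · t^{1/2} ≤ C (s/t)^{1/2 - max(α,0)}`. -/
theorem stmt1 (α : ℝ) (hα : α ∈ Ioo (-(1/2) : ℝ) (1/2)) (hα0 : α ≠ 0) :
    ∃ C : ℝ, 0 < C ∧ ∀ s t : ℝ, 0 < s → s < t →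
      |t ^ α - s ^ α| / (t - s) * s ^ ((1:ℝ)/2 - α) * t ^ ((1:ℝ)/2)
        ≤ C * (s / t) ^ ((1:ℝ)/2 - max α 0) :=
  stmt1_general α hα
end

section
/- Let -A generate a bounded analytic semigroup on H, β < 1, f ∈ L²((0,∞), t^β dt; H), and let v(t) = ∫₀^t e^{-(t-s)A} f(s) ds. Then v ∈ C⁰([0,∞); H), v(0) = 0, and v is a weak solution of u̇ + Au = f on (0,∞): for all φ ∈ C¹_c((0,∞); H) ∩ C⁰_c((0,∞); D(A*)), ∫₀^∞ (v(s), -φ̇(s) + A*φ(s)) ds = ∫₀^∞ (f(s), φ(s)) ds. -/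
/-!
The semigroup is only controlled for nonnegative times, so it is evaluated at `max t 0`
throughout; `(t, x) ↦ T (max t 0) x` is then jointly continuous and bounded by `M ‖x‖`.

Since `‖f s‖ ≤ (s ^ (-β) + s ^ β ‖f s‖ ^ 2) / 2` and `s ^ (-β)` is integrable near `0` for `β < 1`,
`f` is integrable on every `(0, K)`. Continuity of `v` is then dominated convergence with bound
`M ‖f‖`. For the weak equation, Fubini on the triangle `0 < p < s` reduces the identity to the
homogeneous one along each orbit: for `s > p` the pairing `⟪T (s - p) y, φ s⟫` has derivative
`-⟪T (s - p) y, -φ' s + A* φ s⟫` by duality, and integrating over `(p, ∞)` gives `⟪y, φ p⟫`.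
-/

open MeasureTheory Set Filter Topology
open scoped ComplexInnerProductSpace

theorem le_rpow_neg_add_rpow_mul_sq_div_two {β s : ℝ} (hs : 0 < s) (a : ℝ) :
    a ≤ (s ^ (-β) + s ^ β * a ^ 2) / 2 := by
  have hsq := two_mul_le_add_sq (s ^ (-β / 2)) (s ^ (β / 2) * a)
  have h1 : s ^ (-β / 2) * (s ^ (β / 2) * a) = a := by
    rw [← mul_assoc, ← Real.rpow_add hs, neg_div, neg_add_cancel, Real.rpow_zero, one_mul]
  have h2 : (s ^ (-β / 2)) ^ 2 = s ^ (-β) := by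
    rw [← Real.rpow_natCast, ← Real.rpow_mul hs.le]; ring_nf
  have h3 : (s ^ (β / 2) * a) ^ 2 = s ^ β * a ^ 2 := by
    rw [mul_pow, ← Real.rpow_natCast, ← Real.rpow_mul hs.le]; ring_nf
  rw [mul_assoc, h1, h2, h3] at hsq
  linarith

theorem integrableOn_Ioo_of_integrableOn_rpow_mul_sq {E : Type*} [NormedAddCommGroup E]
    {β : ℝ} (hβ : β < 1) {f : ℝ → E} (hf : AEStronglyMeasurable f (volume.restrict (Ioi 0)))
    (hf2 : IntegrableOn (fun s => s ^ β * ‖f s‖ ^ 2) (Ioi 0)) (K : ℝ) :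
    IntegrableOn f (Ioo 0 K) := by
  refine IntegrableOn.mono_set ?_ (Ioo_subset_Ioo_right (le_max_left K 1))
  have hpow : IntegrableOn (fun s : ℝ => s ^ (-β)) (Ioo 0 (max K 1)) :=
    (intervalIntegral.integrableOn_Ioo_rpow_iff (by positivity)).2 (by linarith)
  refine ((hpow.add (hf2.mono_set Ioo_subset_Ioi_self)).div_const 2).mono'
    (hf.mono_set Ioo_subset_Ioi_self) ?_
  filter_upwards [ae_restrict_mem measurableSet_Ioo] with s hs
  exact le_rpow_neg_add_rpow_mul_sq_div_two hs.1 _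

theorem HasCompactSupport.eventually_atTop_eq_zero {α γ : Type*} [TopologicalSpace α]
    [LinearOrder α] [NoMaxOrder α] [ClosedIciTopology α] [Zero γ] {f : α → γ}
    (hf : HasCompactSupport f) :
    ∀ᶠ s in atTop, f s = 0 :=
  Eventually.mono (atTop_le_cocompact hf.isCompact.compl_mem_cocompact) fun _ hs =>
    image_eq_zero_of_notMem_tsupport hs

theorem inner_integral_left {α 𝕜 E : Type*} [MeasurableSpace α] {μ : Measure α} [RCLike 𝕜]
    [NormedAddCommGroup E] [InnerProductSpace 𝕜 E] [NormedSpace ℝ E] [CompleteSpace E]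
    {f : α → E} (hf : Integrable f μ) (c : E) :
    inner 𝕜 (∫ x, f x ∂μ) c = ∫ x, inner 𝕜 (f x) c ∂μ := by
  rw [← inner_conj_symm, ← integral_inner hf, ← integral_conj]
  simp_rw [inner_conj_symm]

theorem continuous_setIntegral_Ioo_of_dominated {E : Type*} [NormedAddCommGroup E]
    [NormedSpace ℝ E] {G : ℝ → ℝ → E} {g : ℝ → ℝ}
    (hGm : ∀ t, AEStronglyMeasurable (G t) (volume.restrict (Ioi 0)))
    (hGc : ∀ s, Continuous fun t => G t s) (hGg : ∀ t s, ‖G t s‖ ≤ g s)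
    (hg : ∀ K, IntegrableOn g (Ioo 0 K)) :
    Continuous fun t => ∫ s in Ioo 0 t, G t s := by
  refine continuous_iff_continuousAt.2 fun t₀ => ?_
  have hcut : ∀ t < t₀ + 1,
      ∫ s in Ioo 0 t, G t s = ∫ s in Ioo 0 (t₀ + 1), (Iio t).indicator (G t) s := by
    intro t ht
    rw [setIntegral_indicator measurableSet_Iio, Ioo_inter_Iio, min_eq_right ht.le]
  have hlim : ContinuousAt (fun t => ∫ s in Ioo 0 (t₀ + 1), (Iio t).indicator (G t) s) t₀ := by
    refine continuousAt_of_dominated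
      (Eventually.of_forall fun t => ((hGm t).mono_set Ioo_subset_Ioi_self).indicator
        measurableSet_Iio)
      (Eventually.of_forall fun t => ae_of_all _ fun s =>
        (norm_indicator_le_norm_self _ _).trans (hGg t s)) (hg _) ?_
    filter_upwards [ae_restrict_of_ae ((countable_singleton t₀).ae_notMem volume)] with s hs
    -- `(Iio t).indicator (G t) s` is `(Ioi s).indicator (G · s) t` by unfolding
    exact ((hGc s).continuousOn (s := interior (Ioi s))).continuousAt_indicator
      (by rw [frontier_Ioi]; exact Ne.symm hs)
  exact hlim.congr (eventually_lt_nhds (lt_add_one t₀) |>.mono fun t ht => (hcut t ht).symm)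

theorem integral_Ioo_integral_Ioo_swap {E : Type*} [NormedAddCommGroup E] [NormedSpace ℝ E]
    {F : ℝ → ℝ → E} {a b : ℝ}
    (hF : IntegrableOn (fun q : ℝ × ℝ => F q.1 q.2) (Ioo a b ×ˢ Ioo a b)) :
    ∫ s in Ioo a b, ∫ p in Ioo a s, F s p = ∫ p in Ioo a b, ∫ s in Ioo p b, F s p := by
  have hlower : ∀ s ∈ Ioo a b,
      ∫ p in Ioo a s, F s p = ∫ p in Ioo a b, (Iio s).indicator (F s) p := fun s hs => by
    rw [setIntegral_indicator measurableSet_Iio, Ioo_inter_Iio, min_eq_right hs.2.le]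
  have hupper : ∀ p ∈ Ioo a b,
      ∫ s in Ioo p b, F s p = ∫ s in Ioo a b, (Ioi p).indicator (fun s => F s p) s := fun p hp => by
    rw [setIntegral_indicator measurableSet_Ioi, Ioo_inter_Ioi, max_eq_right hp.1.le]
  have hint : Integrable (Function.uncurry fun s p => (Iio s).indicator (F s) p)
      ((volume.restrict (Ioo a b)).prod (volume.restrict (Ioo a b))) := by
    rw [Measure.prod_restrict, ← Measure.volume_eq_prod]
    exact hF.indicator (measurableSet_lt measurable_snd measurable_fst)
  rw [setIntegral_congr_fun measurableSet_Ioo hlower,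
    setIntegral_congr_fun measurableSet_Ioo hupper]
  exact integral_integral_swap hint

theorem continuous_apply_max_zero {𝕜 E F : Type*} [NontriviallyNormedField 𝕜]
    [NormedAddCommGroup E] [NormedSpace 𝕜 E] [NormedAddCommGroup F] [NormedSpace 𝕜 F]
    {T : ℝ → E →L[𝕜] F} {M : ℝ} (hM : ∀ t, 0 ≤ t → ‖T t‖ ≤ M)
    (hT : ∀ x, ContinuousOn (fun t => T t x) (Ici 0)) :
    Continuous fun q : ℝ × E => T (max q.1 0) q.2 :=
  continuous_prod_of_continuous_lipschitzWith' _ M.toNNReal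
    (fun t => ContinuousLinearMap.lipschitzWith_of_opNorm_le
      ((hM _ (le_max_right t 0)).trans (Real.le_coe_toNNReal M)))
    (fun x => (hT x).comp_continuous (continuous_id.max continuous_const)
      fun t => le_max_right t 0)

theorem integrable_apply_max_zero {α 𝕜 E F : Type*} [MeasurableSpace α] {μ : Measure α}
    [NontriviallyNormedField 𝕜] [NormedAddCommGroup E] [NormedSpace 𝕜 E] [NormedAddCommGroup F]
    [NormedSpace 𝕜 F] {T : ℝ → E →L[𝕜] F} {M : ℝ} (hM : ∀ t, 0 ≤ t → ‖T t‖ ≤ M)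
    (hTc : Continuous fun q : ℝ × E => T (max q.1 0) q.2)
    {τ : α → ℝ} (hτ : AEStronglyMeasurable τ μ) {g : α → E} (hg : Integrable g μ) :
    Integrable (fun a => T (max (τ a) 0) (g a)) μ :=
  (hg.norm.const_mul M).mono' (hTc.comp_aestronglyMeasurable (hτ.prodMk hg.1))
    (ae_of_all _ fun _ => (T _).le_of_opNorm_le (hM _ (le_max_right _ _)) _)

section

variable {H : Type*} [NormedAddCommGroup H] [InnerProductSpace ℂ H] {T : ℝ → H →L[ℂ] H}
  {domA : Submodule ℂ H} {A : domA →ₗ[ℂ] H} {domAstar : Submodule ℂ H} {Astar : domAstar →ₗ[ℂ] H}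
  {φ φ' Aφ : ℝ → H}

theorem hasDerivAt_inner_apply_max_sub
    (hgen : ∀ y : H, ∀ r : ℝ, 0 < r → ∃ hx : T r y ∈ domA,
      HasDerivAt (fun ρ : ℝ => T ρ y) (-(A ⟨T r y, hx⟩)) r)
    (hdual : ∀ x : domA, ∀ z : domAstar, ⟪A x, (z : H)⟫ = ⟪(x : H), Astar z⟫)
    {p s : ℝ} (hps : p < s) (y : H) (hφd : HasDerivAt φ (φ' s) s)
    (hdom : ∃ hz : φ s ∈ domAstar, Astar ⟨φ s, hz⟩ = Aφ s) :
    HasDerivAt (fun σ => ⟪T (max (σ - p) 0) y, φ σ⟫)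
      (-⟪T (max (s - p) 0) y, -(φ' s) + Aφ s⟫) s := by
  obtain ⟨hx, horbit⟩ := hgen y (s - p) (sub_pos.2 hps)
  obtain ⟨hz, hAφ⟩ := hdom
  have horbit' : HasDerivAt (fun σ => T (max (σ - p) 0) y) (-A ⟨T (s - p) y, hx⟩) s := by
    refine (horbit.comp_sub_const s p).congr_of_eventuallyEq ?_
    filter_upwards [eventually_gt_nhds hps] with σ hσ
    rw [max_eq_left (sub_nonneg.2 hσ.le)]
  refine (horbit'.inner ℂ hφd).congr_deriv ?_
  rw [inner_neg_left, ← hAφ, max_eq_left (sub_nonneg.2 hps.le), inner_add_right, inner_neg_right,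
    ← hdual ⟨T (s - p) y, hx⟩ ⟨φ s, hz⟩]
  ring

theorem hasCompactSupport_neg_deriv_add_adjoint (hφc : HasCompactSupport φ)
    (hφd : ∀ t, HasDerivAt φ (φ' t) t)
    (hdom : ∀ t, ∃ hz : φ t ∈ domAstar, Astar ⟨φ t, hz⟩ = Aφ t) :
    HasCompactSupport fun s => -(φ' s) + Aφ s := by
  have hφ' : φ' = deriv φ := funext fun t => (hφd t).deriv.symm
  have hAφ : HasCompactSupport Aφ := hφc.mono fun t ht hφt => by
    obtain ⟨hz, hAφ⟩ := hdom t
    have hzero : (⟨φ t, hz⟩ : domAstar) = 0 := Subtype.ext hφt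
    exact ht (by rw [← hAφ, hzero, map_zero])
  exact (hφ' ▸ hφc.deriv).neg.add hAφ

theorem setIntegral_Ioi_inner_apply_max_sub (hT0 : T 0 = ContinuousLinearMap.id ℂ H)
    (hTc : Continuous fun q : ℝ × H => T (max q.1 0) q.2)
    (hgen : ∀ y : H, ∀ r : ℝ, 0 < r → ∃ hx : T r y ∈ domA,
      HasDerivAt (fun ρ : ℝ => T ρ y) (-(A ⟨T r y, hx⟩)) r)
    (hdual : ∀ x : domA, ∀ z : domAstar, ⟪A x, (z : H)⟫ = ⟪(x : H), Astar z⟫)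
    (hφc : HasCompactSupport φ) (hφd : ∀ t, HasDerivAt φ (φ' t) t)
    (hψc : Continuous fun s => -(φ' s) + Aφ s)
    (hdom : ∀ t, ∃ hz : φ t ∈ domAstar, Astar ⟨φ t, hz⟩ = Aφ t) (p : ℝ) (y : H) :
    ∫ s in Ioi p, ⟪T (max (s - p) 0) y, -(φ' s) + Aφ s⟫ = ⟪y, φ p⟫ := by
  have horbit : Continuous fun s => T (max (s - p) 0) y :=
    hTc.comp ((continuous_sub_right p).prodMk continuous_const)
  have hφ : Continuous φ := continuous_iff_continuousAt.2 fun t => (hφd t).continuousAt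
  have hint : Integrable fun s => ⟪T (max (s - p) 0) y, -(φ' s) + Aφ s⟫ :=
    (horbit.inner hψc).integrable_of_hasCompactSupport
      ((hasCompactSupport_neg_deriv_add_adjoint hφc hφd hdom).mono fun s hs h0 => hs (by simp [h0]))
  have hlim : Tendsto (fun s => ⟪T (max (s - p) 0) y, φ s⟫) atTop (𝓝 0) :=
    tendsto_const_nhds.congr' (hφc.eventually_atTop_eq_zero.mono fun s h => by simp [h])
  have hftc := integral_Ioi_of_hasDerivAt_of_tendsto (horbit.inner hφ).continuousWithinAt
    (fun s hs => hasDerivAt_inner_apply_max_sub hgen hdual hs y (hφd s) (hdom s))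
    hint.neg.integrableOn hlim
  rw [integral_neg, sub_self, max_self, hT0, zero_sub] at hftc
  exact neg_inj.1 hftc

theorem setIntegral_inner_duhamel_eq [CompleteSpace H] {M : ℝ} (hM : ∀ t, 0 ≤ t → ‖T t‖ ≤ M)
    (hT0 : T 0 = ContinuousLinearMap.id ℂ H)
    (hTc : Continuous fun q : ℝ × H => T (max q.1 0) q.2)
    (hgen : ∀ y : H, ∀ r : ℝ, 0 < r → ∃ hx : T r y ∈ domA,
      HasDerivAt (fun ρ : ℝ => T ρ y) (-(A ⟨T r y, hx⟩)) r)
    (hdual : ∀ x : domA, ∀ z : domAstar, ⟪A x, (z : H)⟫ = ⟪(x : H), Astar z⟫)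
    {f : ℝ → H} (hf : ∀ K, IntegrableOn f (Ioo 0 K))
    (hφc : HasCompactSupport φ) (hφd : ∀ t, HasDerivAt φ (φ' t) t)
    (hψc : Continuous fun s => -(φ' s) + Aφ s)
    (hdom : ∀ t, ∃ hz : φ t ∈ domAstar, Astar ⟨φ t, hz⟩ = Aφ t) :
    ∫ s in Ioi 0, ⟪∫ p in Ioo 0 s, T (max (s - p) 0) (f p), -(φ' s) + Aφ s⟫ =
      ∫ s in Ioi 0, ⟪f s, φ s⟫ := by
  set ψ := fun s => -(φ' s) + Aφ s
  have hψ : HasCompactSupport ψ := hasCompactSupport_neg_deriv_add_adjoint hφc hφd hdom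
  obtain ⟨K, hK⟩ := eventually_atTop.1
    (hφc.eventually_atTop_eq_zero.and hψ.eventually_atTop_eq_zero)
  have hrestrict : ∀ {g : ℝ → ℂ} {a : ℝ}, (∀ s, K ≤ s → g s = 0) →
      ∫ s in Ioi a, g s = ∫ s in Ioo a K, g s := fun hg =>
    setIntegral_eq_of_subset_of_forall_sdiff_eq_zero measurableSet_Ioi Ioo_subset_Ioi_self
      fun s hs => hg s (not_lt.1 fun h => hs.2 ⟨hs.1, h⟩)
  have hint : IntegrableOn (fun q : ℝ × ℝ => ⟪T (max (q.1 - q.2) 0) (f q.2), ψ q.1⟫)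
      (Ioo 0 K ×ˢ Ioo 0 K) := by
    rw [IntegrableOn, Measure.volume_eq_prod, ← Measure.prod_restrict]
    refine ((hψc.norm.integrable_of_hasCompactSupport hψ.norm).restrict.mul_prod
      ((hf K).norm.const_mul M)).mono' ?_ ?_
    · exact (hTc.comp_aestronglyMeasurable
        ((continuous_fst.sub continuous_snd).aestronglyMeasurable.prodMk (hf K).1.comp_snd)).inner
        (hψc.comp continuous_fst).aestronglyMeasurable
    · refine ae_of_all _ fun q => (norm_inner_le_norm _ _).trans ?_
      rw [mul_comm]
      exact mul_le_mul_of_nonneg_left ((T _).le_of_opNorm_le (hM _ (le_max_right _ _)) _)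
        (norm_nonneg _)
  calc ∫ s in Ioi 0, ⟪∫ p in Ioo 0 s, T (max (s - p) 0) (f p), ψ s⟫
      = ∫ s in Ioo 0 K, ∫ p in Ioo 0 s, ⟪T (max (s - p) 0) (f p), ψ s⟫ := by
        rw [hrestrict fun s hs => by simp [(hK s hs).2]]
        refine setIntegral_congr_fun measurableSet_Ioo fun s _ => inner_integral_left ?_ _
        exact integrable_apply_max_zero hM hTc (by fun_prop) (hf s)
    _ = ∫ p in Ioo 0 K, ∫ s in Ioo p K, ⟪T (max (s - p) 0) (f p), ψ s⟫ :=
        integral_Ioo_integral_Ioo_swap hint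
    _ = ∫ p in Ioo 0 K, ⟪f p, φ p⟫ := by
        refine setIntegral_congr_fun measurableSet_Ioo fun p _ => ?_
        rw [← hrestrict fun s hs => by simp [(hK s hs).2]]
        exact setIntegral_Ioi_inner_apply_max_sub hT0 hTc hgen hdual hφc hφd hψc hdom p (f p)
    _ = ∫ p in Ioi 0, ⟪f p, φ p⟫ := (hrestrict fun p hp => by simp [(hK p hp).1]).symm

end

theorem stmt11_general {H : Type*} [NormedAddCommGroup H] [InnerProductSpace ℂ H] [CompleteSpace H]
    (T : ℝ → H →L[ℂ] H) (M : ℝ)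
    (hM : ∀ t : ℝ, 0 ≤ t → ‖T t‖ ≤ M)
    (hT0 : T 0 = ContinuousLinearMap.id ℂ H)
    (hTcont : ∀ x : H, ContinuousOn (fun t => T t x) (Ici 0))
    (domA : Submodule ℂ H) (A : domA →ₗ[ℂ] H)
    (hgen : ∀ y : H, ∀ r : ℝ, 0 < r → ∃ hx : T r y ∈ domA,
      HasDerivAt (fun ρ : ℝ => T ρ y) (-(A ⟨T r y, hx⟩)) r)
    (domAstar : Submodule ℂ H) (Astar : domAstar →ₗ[ℂ] H)
    (hdual : ∀ x : domA, ∀ z : domAstar, ⟪A x, (z : H)⟫ = ⟪(x : H), Astar z⟫)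
    (β : ℝ) (hβ : β < 1) (f : ℝ → H)
    (hf : AEStronglyMeasurable f ((volume : Measure ℝ).restrict (Ioi 0)))
    (hf2 : IntegrableOn (fun s => s ^ β * ‖f s‖ ^ 2) (Ioi 0))
    (v : ℝ → H) (hv : ∀ t, v t = ∫ s in Ioo 0 t, T (t - s) (f s)) :
    ContinuousOn v (Ici 0) ∧ v 0 = 0 ∧
      ∀ (φ φ' Aφ : ℝ → H),
        HasCompactSupport φ → Function.support φ ⊆ Ioi 0 →
        (∀ t, HasDerivAt φ (φ' t) t) → Continuous φ' → Continuous Aφ →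
        (∀ t, ∃ hz : φ t ∈ domAstar, Astar ⟨φ t, hz⟩ = Aφ t) →
        ∫ s in Ioi (0:ℝ), ⟪v s, -(φ' s) + Aφ s⟫ = ∫ s in Ioi (0:ℝ), ⟪f s, φ s⟫ := by
  have hTc := continuous_apply_max_zero hM hTcont
  have hfloc := integrableOn_Ioo_of_integrableOn_rpow_mul_sq hβ hf hf2
  have hv' : v = fun t => ∫ s in Ioo 0 t, T (max (t - s) 0) (f s) := funext fun t => by
    rw [hv]
    exact setIntegral_congr_fun measurableSet_Ioo fun s hs => by
      rw [max_eq_left (sub_nonneg.2 hs.2.le)]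
  refine ⟨?_, by simp [hv], ?_⟩
  · rw [hv']
    refine (continuous_setIntegral_Ioo_of_dominated (g := fun s => M * ‖f s‖)
      (fun t => hTc.comp_aestronglyMeasurable
        ((continuous_const.sub continuous_id).aestronglyMeasurable.prodMk hf))
      (fun s => hTc.comp ((continuous_sub_right s).prodMk continuous_const))
      (fun t s => (T _).le_of_opNorm_le (hM _ (le_max_right _ _)) _)
      (fun K => (hfloc K).norm.const_mul M)).continuousOn
  · intro φ φ' Aφ hφc _ hφd hφ'c hAφc hdom
    rw [hv']
    exact setIntegral_inner_duhamel_eq hM hT0 hTc hgen hdual hfloc hφc hφd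
      (hφ'c.neg.add hAφc) hdom

/-- let `-A` generate a bounded analytic semigroup `T` on `H`, `β < 1`,
`f ∈ L²((0,∞), t^β dt; H)`, and `v(t) = ∫₀^t e^{-(t-s)A} f(s) ds`. Then `v` is continuous
on `[0,∞)` with `v(0) = 0` and `v` is a weak solution of `u̇ + Au = f`: for every test
function `φ ∈ C¹_c((0,∞); H) ∩ C⁰_c((0,∞); D(A*))` (with `A*φ` given by `Aφ`),
`∫₀^∞ ⟪v(s), -φ'(s) + A*φ(s)⟫ ds = ∫₀^∞ ⟪f(s), φ(s)⟫ ds`. -/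
theorem stmt11 {H : Type*} [NormedAddCommGroup H] [InnerProductSpace ℂ H] [CompleteSpace H]
    (T : ℝ → H →L[ℂ] H) (M : ℝ)
    (hM : ∀ t : ℝ, 0 ≤ t → ‖T t‖ ≤ M)
    (hT0 : T 0 = ContinuousLinearMap.id ℂ H)
    (hTadd : ∀ s t : ℝ, 0 ≤ s → 0 ≤ t → T (s + t) = (T s).comp (T t))
    (hTcont : ∀ x : H, ContinuousOn (fun t => T t x) (Ici 0))
    (domA : Submodule ℂ H) (A : domA →ₗ[ℂ] H)
    (hgen : ∀ y : H, ∀ r : ℝ, 0 < r → ∃ hx : T r y ∈ domA,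
      HasDerivAt (fun ρ : ℝ => T ρ y) (-(A ⟨T r y, hx⟩)) r)
    (domAstar : Submodule ℂ H) (Astar : domAstar →ₗ[ℂ] H)
    (hdual : ∀ x : domA, ∀ z : domAstar, ⟪A x, (z : H)⟫ = ⟪(x : H), Astar z⟫)
    (β : ℝ) (hβ : β < 1) (f : ℝ → H)
    (hf : AEStronglyMeasurable f ((volume : Measure ℝ).restrict (Ioi 0)))
    (hf2 : IntegrableOn (fun s => s ^ β * ‖f s‖ ^ 2) (Ioi 0))
    (hmeas : ∀ t : ℝ, AEStronglyMeasurable (fun s => T (t - s) (f s))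
      ((volume : Measure ℝ).restrict (Ioo 0 t)))
    (v : ℝ → H) (hv : ∀ t, v t = ∫ s in Ioo 0 t, T (t - s) (f s)) :
    ContinuousOn v (Ici 0) ∧ v 0 = 0 ∧
      ∀ (φ φ' Aφ : ℝ → H),
        HasCompactSupport φ → Function.support φ ⊆ Ioi 0 →
        (∀ t, HasDerivAt φ (φ' t) t) → Continuous φ' → Continuous Aφ →
        (∀ t, ∃ hz : φ t ∈ domAstar, Astar ⟨φ t, hz⟩ = Aφ t) →
        ∫ s in Ioi (0:ℝ), ⟪v s, -(φ' s) + Aφ s⟫ = ∫ s in Ioi (0:ℝ), ⟪f s, φ s⟫ :=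
  stmt11_general T M hM hT0 hTcont domA A hgen domAstar Astar hdual β hβ f hf hf2 v hv
end
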